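/- In a strongly admissible labelling with min-max numbering MM, every in-labelled argument has an odd min-max number and every out-labelled argument has an even min-max number. -/

import Mathlib

inductive Label where
  | inn | out | und
deriving DecidableEq

/-- A labelling is admissible if every in-labelled argument has all its attackers
labelled out, and every out-labelled argument has at least one in-labelled attacker. -/
def Admissible {Ar : Type*} (att : Ar → Ar → Prop) (L : Ar → Label) : Prop :=
  (∀ x, L x = Label.inn → ∀ y, att y x → L y = Label.out) ∧
  (∀ x, L x = Label.out → ∃ y, att y x ∧ L y = Label.inn)

/-- A min-max numbering (with only natural-number values): in-arguments are numbered
1 + max of the numbers of their out-labelled attackers (max ∅ = 0), and out-arguments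
1 + min of the numbers of their in-labelled attackers. -/
def IsMinMax {Ar : Type*} (att : Ar → Ar → Prop) (L : Ar → Label) (MM : Ar → ℕ) : Prop :=
  (∀ x, L x = Label.inn → MM x = sSup (MM '' {y | att y x ∧ L y = Label.out}) + 1) ∧
  (∀ x, L x = Label.out → MM x = sInf (MM '' {y | att y x ∧ L y = Label.inn}) + 1)

/-- Strongly admissible: admissible and admitting a min-max numbering with only
natural-number (finite) values. -/
def StronglyAdmissible {Ar : Type*} (att : Ar → Ar → Prop) (L : Ar → Label) : Prop :=
  Admissible att L ∧ ∃ MM : Ar → ℕ, IsMinMax att L MM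

/-- Complete labelling: admissible, and every undec argument has an undec attacker
and no in-labelled attacker. -/
def CompleteLab {Ar : Type*} (att : Ar → Ar → Prop) (L : Ar → Label) : Prop :=
  Admissible att L ∧
  ∀ x, L x = Label.und →
    (∃ y, att y x ∧ L y = Label.und) ∧ ∀ y, att y x → L y ≠ Label.inn

/-- The order on labellings: Lab1 ⊑ Lab2 iff in(Lab1) ⊆ in(Lab2) and out(Lab1) ⊆ out(Lab2). -/
def LabLe {Ar : Type*} (L1 L2 : Ar → Label) : Prop :=
  (∀ x, L1 x = Label.inn → L2 x = Label.inn) ∧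
  (∀ x, L1 x = Label.out → L2 x = Label.out)

/-! Strong induction on `MM x`: an in-argument's number is `1`, or one more than the number of
an out-attacker realising the maximum; an out-argument's number is one more than the number of
an in-attacker realising the minimum, which exists by admissibility. So parity alternates. -/

theorem Nat.sSup_mem_or_eq_zero (s : Set ℕ) : sSup s ∈ s ∨ sSup s = 0 := by
  rcases s.eq_empty_or_nonempty with rfl | hne
  · exact Or.inr csSup_empty
  by_cases hbdd : BddAbove s
  · exact Or.inl (Nat.sSup_mem hne hbdd)
  · exact Or.inr (Nat.sSup_of_not_bddAbove hbdd)

section MinMax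

variable {Ar : Type*} {att : Ar → Ar → Prop} {Lab : Ar → Label} {MM : Ar → ℕ}

theorem IsMinMax.odd_of_inn (hmm : IsMinMax att Lab MM) {x : Ar} (hx : Lab x = Label.inn)
    (ih : ∀ y, MM y < MM x → Lab y = Label.out → Even (MM y)) : Odd (MM x) := by
  have hMM := hmm.1 x hx
  rcases Nat.sSup_mem_or_eq_zero (MM '' {y | att y x ∧ Lab y = Label.out}) with
    ⟨y, ⟨-, hy⟩, hy_max⟩ | hzero
  · rw [hMM, ← hy_max]
    exact (ih y (by omega) hy).add_one
  · -- no out-attackers, or unboundedly many numbers, where `sSup` takes the junk value `0`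
    rw [hMM, hzero]
    exact odd_one

theorem IsMinMax.even_of_out (hadm : Admissible att Lab) (hmm : IsMinMax att Lab MM) {x : Ar}
    (hx : Lab x = Label.out) (ih : ∀ y, MM y < MM x → Lab y = Label.inn → Odd (MM y)) :
    Even (MM x) := by
  have hMM := hmm.2 x hx
  obtain ⟨y, hyx, hy⟩ := hadm.2 x hx
  obtain ⟨z, ⟨-, hz⟩, hz_min⟩ := Nat.sInf_mem (s := MM '' {y | att y x ∧ Lab y = Label.inn})
    ⟨MM y, y, ⟨hyx, hy⟩, rfl⟩
  rw [hMM, ← hz_min]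
  exact (ih z (by omega) hz).add_one

end MinMax

theorem minMax_parity_general
    {Ar : Type*} (att : Ar → Ar → Prop) (Lab : Ar → Label) (MM : Ar → ℕ)
    (hadm : Admissible att Lab) (hmm : IsMinMax att Lab MM) :
    (∀ x, Lab x = Label.inn → Odd (MM x)) ∧ (∀ x, Lab x = Label.out → Even (MM x)) := by
  suffices h : ∀ n, ∀ x, MM x = n →
      (Lab x = Label.inn → Odd (MM x)) ∧ (Lab x = Label.out → Even (MM x)) from
    ⟨fun x => (h _ x rfl).1, fun x => (h _ x rfl).2⟩
  intro n
  induction n using Nat.strong_induction_on with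
  | _ n ih =>
    rintro x rfl
    exact ⟨fun hx => hmm.odd_of_inn hx fun y hy => (ih _ hy y rfl).2,
      fun hx => hmm.even_of_out hadm hx fun y hy => (ih _ hy y rfl).1⟩

/-- In a strongly admissible labelling with min-max numbering MM,
in-labelled arguments have odd min-max numbers and out-labelled ones even. -/
theorem minMax_parity
    {Ar : Type*} [Fintype Ar] (att : Ar → Ar → Prop) (Lab : Ar → Label) (MM : Ar → ℕ)
    (hadm : Admissible att Lab) (hmm : IsMinMax att Lab MM) :
    (∀ x, Lab x = Label.inn → Odd (MM x)) ∧ (∀ x, Lab x = Label.out → Even (MM x)) :=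
  minMax_parity_general att Lab MM hadm hmm
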